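/- Let C be a coalgebra over a field k and L(C) = C ⊗ C⁺ where C⁺ = ker ε, with left C-coaction Δ ⊗ id and right C-coaction given by (c ⊗ d) ↦ c ⊗ Δ(d) − Δ(c) ⊗ d (restricted to C ⊗ C⁺, landing in C ⊗ C⁺ ⊗ C). Then the map λ : L(C) → C, λ(c ⊗ d) = ε(c) d, is a coderivation: Δ ∘ λ = (id_C ⊗ λ) ∘ (left coaction) + (λ ⊗ id_C) ∘ (right coaction). -/

import Mathlib

/-! Counitality makes `id ⊗ ε ⊗ id` kill `c ⊗ Δd − Δc ⊗ d`, and since tensoring over a field is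
exact, the kernel of `id ⊗ ε ⊗ id` is `C ⊗ C⁺ ⊗ C`; so the right coaction lands in `L(C) ⊗ C`.
On `c ⊗ d`, counitality gives `(id ⊗ λ)(Δc ⊗ d) = c ⊗ d` and
`(Λ ⊗ id)(c ⊗ Δd − Δc ⊗ d) = ε(c) Δd − c ⊗ d`, which add up to `Δ(ε(c) d)`. -/

open TensorProduct LinearMap

variable (k C : Type) [Field k] [AddCommGroup C] [Module k C] [Coalgebra k C]

/-- `C⁺ = ker ε`. -/
noncomputable def Cplus : Submodule k C := LinearMap.ker (Coalgebra.counit (R := k))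

/-- `L(C) = C ⊗ C⁺`. -/
noncomputable abbrev LC := C ⊗[k] ↥(Cplus k C)

/-- The left `C`-coaction `Δ ⊗ id` on `L(C) = C ⊗ C⁺`. -/
noncomputable def lcoact : LC k C →ₗ[k] C ⊗[k] LC k C :=
  (TensorProduct.assoc k C C ↥(Cplus k C)).toLinearMap
    ∘ₗ rTensor ↥(Cplus k C) (Coalgebra.comul (R := k))

/-- The universal coderivation `λ : L(C) → C`, `c ⊗ d ↦ ε(c) d`. -/
noncomputable def lam : LC k C →ₗ[k] C :=
  (Cplus k C).subtype ∘ₗ (TensorProduct.lid k ↥(Cplus k C)).toLinearMap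
    ∘ₗ rTensor ↥(Cplus k C) (Coalgebra.counit (R := k))

/-- The right `C`-coaction on `L(C)` viewed in the ambient space `C ⊗ C ⊗ C`:
`c ⊗ d ↦ c ⊗ Δ(d) − Δ(c) ⊗ d`. -/
noncomputable def rcoactAmb : LC k C →ₗ[k] (C ⊗[k] C) ⊗[k] C :=
  (TensorProduct.assoc k C C C).symm.toLinearMap
      ∘ₗ lTensor C (Coalgebra.comul (R := k) ∘ₗ (Cplus k C).subtype)
    - TensorProduct.map (Coalgebra.comul (R := k)) (Cplus k C).subtype

/-- The inclusion `L(C) ⊗ C = (C ⊗ C⁺) ⊗ C → (C ⊗ C) ⊗ C`. -/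
noncomputable def jmap : LC k C ⊗[k] C →ₗ[k] (C ⊗[k] C) ⊗[k] C :=
  rTensor C (lTensor C (Cplus k C).subtype)

/-- The ambient extension `Λ : C ⊗ C → C`, `c ⊗ d ↦ ε(c) • d` of `λ`. -/
noncomputable def lamAmb : C ⊗[k] C →ₗ[k] C :=
  (TensorProduct.lid k C).toLinearMap ∘ₗ rTensor C (Coalgebra.counit (R := k))

section FlatKernel

variable {R M N P Q : Type*} [CommRing R] [AddCommGroup M] [Module R M] [AddCommGroup N]
  [Module R N] [AddCommGroup P] [Module R P] [AddCommGroup Q] [Module R Q]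
  [Module.Flat R P] [Module.Flat R Q]

theorem mem_range_rTensor_lTensor_ker_subtype {f : M →ₗ[R] N} {x : (P ⊗[R] M) ⊗[R] Q}
    (hx : rTensor Q (lTensor P f) x = 0) :
    x ∈ range (rTensor Q (lTensor P (ker f).subtype)) :=
  (Module.Flat.rTensor_exact Q (Module.Flat.lTensor_exact P f.exact_subtype_ker_map) x).mp hx

end FlatKernel

section UniversalCoderivation

open Coalgebra

variable {k C}

theorem lam_tmul (c : C) (d : Cplus k C) : lam k C (c ⊗ₜ d) = counit (R := k) c • (d : C) := by
  simp [lam]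

theorem lamAmb_tmul (c d : C) : lamAmb k C (c ⊗ₜ d) = counit (R := k) c • d := by
  simp [lamAmb]

theorem lamAmb_comul (c : C) : lamAmb k C (comul (R := k) c) = c := by
  simp [lamAmb, rTensor_counit_comul]

theorem rTensor_lamAmb_assoc_symm_tmul (c : C) (u : C ⊗[k] C) :
    rTensor C (lamAmb k C) ((TensorProduct.assoc k C C C).symm (c ⊗ₜ u)) =
      counit (R := k) c • u := by
  induction u using TensorProduct.induction_on with
  | zero => simp
  | tmul x y => simp [lamAmb_tmul, smul_tmul']
  | add a b ha hb => simp [tmul_add, ha, hb]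

theorem lTensor_lam_assoc_tmul (t : C ⊗[k] C) (d : Cplus k C) :
    lTensor C (lam k C) (TensorProduct.assoc k C C (Cplus k C) (t ⊗ₜ d)) =
      TensorProduct.rid k C (lTensor C (counit (R := k)) t) ⊗ₜ (d : C) := by
  induction t using TensorProduct.induction_on with
  | zero => simp
  | tmul a b => simp [lam_tmul, smul_tmul]
  | add a b ha hb => simp [add_tmul, ha, hb]

theorem lTensor_lam_lcoact_tmul (c : C) (d : Cplus k C) :
    lTensor C (lam k C) (lcoact k C (c ⊗ₜ d)) = c ⊗ₜ (d : C) := by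
  simp [lcoact, lTensor_lam_assoc_tmul, lTensor_counit_comul]

theorem rTensor_lamAmb_rcoactAmb_tmul (c : C) (d : Cplus k C) :
    rTensor C (lamAmb k C) (rcoactAmb k C (c ⊗ₜ d)) =
      counit (R := k) c • comul (R := k) (d : C) - c ⊗ₜ (d : C) := by
  simp [rcoactAmb, rTensor_lamAmb_assoc_symm_tmul, lamAmb_comul]

theorem rTensor_lTensor_counit_rcoactAmb (x : LC k C) :
    rTensor C (lTensor C (counit (R := k))) (rcoactAmb k C x) = 0 := by
  induction x using TensorProduct.induction_on with
  | zero => simp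
  | tmul c d =>
    have hassoc := LinearMap.congr_fun (rTensor_lTensor_comp_assoc_symm C (P := C) (Q := C)
      (counit (R := k))) (c ⊗ₜ comul (R := k) (d : C))
    simp only [coe_comp, LinearEquiv.coe_coe, Function.comp_apply] at hassoc
    simp [rcoactAmb, hassoc, rTensor_counit_comul, lTensor_counit_comul]
  | add a b ha hb => simp [ha, hb]

end UniversalCoderivation

/-- **The universal coderivation.** For a coalgebra `C` over a field `k`, the right
coaction `c ⊗ d ↦ c ⊗ Δ(d) − Δ(c) ⊗ d` on `L(C) = C ⊗ C⁺` indeed lands in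
`C ⊗ C⁺ ⊗ C`, and the map `λ(c ⊗ d) = ε(c) d` is a coderivation:
`Δ ∘ λ = (id ⊗ λ) ∘ (left coaction) + (λ ⊗ id) ∘ (right coaction)`. -/
theorem universal_coderivation
    (k C : Type) [Field k] [AddCommGroup C] [Module k C] [Coalgebra k C] :
    (∀ x : LC k C, rcoactAmb k C x ∈ LinearMap.range (jmap k C)) ∧
    (Coalgebra.comul (R := k)) ∘ₗ lam k C =
      lTensor C (lam k C) ∘ₗ lcoact k C + rTensor C (lamAmb k C) ∘ₗ rcoactAmb k C := by
  refine ⟨fun x => mem_range_rTensor_lTensor_ker_subtype (rTensor_lTensor_counit_rcoactAmb x), ?_⟩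
  refine TensorProduct.ext' fun c d => ?_
  simp [lam_tmul, lTensor_lam_lcoact_tmul, rTensor_lamAmb_rcoactAmb_tmul]
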